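/- arXiv:0906.2862 — 2 statements merged into one kernel-verified Lean document; each statement's English description precedes it below -/
import Mathlib

section
/- Let R be an integral domain and let x ∈ R be a nonzero element such that ⋂_{n≥0} xⁿR = 0. Let M be a finitely generated free R-module and let A and B be R-submodules of M. Assume that the natural maps A/xA → M/xM and B/xB → M/xM induced by the inclusions A, B ⊆ M are injective (equivalently, A ∩ xM ⊆ xA and B ∩ xM ⊆ xB), and that the images of A and B in M/xM intersect trivially (equivalently, (A + xM) ∩ (B + xM) ⊆ xM). Then A ∩ B = 0. -/
/-!
Every element of `A ⊓ B` lies in `x • M` by the trivial-intersection hypothesis, hence in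
`x • A ⊓ x • B = x • (A ⊓ B)` by the two injectivity hypotheses and torsion-freeness of `M`.
So `A ⊓ B ≤ xⁿ • M` for all `n`, and a free module over `R` is `x`-adically separated
because its coordinates are.
-/

open Pointwise

namespace Submodule

variable {R M : Type*} [CommSemiring R] [AddCommMonoid M] [Module R M]

theorem smul_inf_of_isSMulRegular {x : R} (hx : IsSMulRegular M x) (A B : Submodule R M) :
    x • (A ⊓ B) = x • A ⊓ x • B := by
  refine le_antisymm (le_inf (smul_mono_right x inf_le_left) (smul_mono_right x inf_le_right)) ?_
  rintro _ ⟨hmA, hmB⟩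
  obtain ⟨a, ha, rfl⟩ := (mem_smul_pointwise_iff_exists _ _ _).1 hmA
  obtain ⟨b, hb, hba⟩ := (mem_smul_pointwise_iff_exists _ _ _).1 hmB
  obtain rfl : b = a := hx hba
  exact smul_mem_pointwise_smul _ _ _ ⟨ha, hb⟩

theorem le_pow_smul_of_le_smul {x : R} {N : Submodule R M} (hN : N ≤ x • N) (n : ℕ) :
    N ≤ x ^ n • N := by
  induction n with
  | zero => simp
  | succ n ih => calc
      N ≤ x • N := hN
      _ ≤ x • x ^ n • N := smul_mono_right x ih
      _ = x ^ (n + 1) • N := by rw [pow_succ', mul_smul]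

theorem iInf_pow_smul_top_eq_bot [Module.Free R M] {x : R}
    (hx : ∀ r : R, (∀ n : ℕ, x ^ n ∣ r) → r = 0) :
    ⨅ n : ℕ, x ^ n • (⊤ : Submodule R M) = ⊥ := by
  let b := Module.Free.chooseBasis R M
  refine eq_bot_iff.2 fun m hm ↦ (mem_bot R).2 ?_
  have hdvd (i : Module.Free.ChooseBasisIndex R M) (n : ℕ) : x ^ n ∣ b.repr m i := by
    obtain ⟨m', -, rfl⟩ := (mem_smul_pointwise_iff_exists _ _ _).1 ((mem_iInf _).1 hm n)
    exact ⟨b.repr m' i, by simp⟩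
  exact b.ext_elem fun i ↦ by simpa using hx _ (hdvd i)

end Submodule

theorem trivial_intersection_of_coinvariants_general
    {R : Type*} [CommRing R] [IsDomain R] (x : R) (hx : x ≠ 0)
    (hxint : ∀ r : R, (∀ n : ℕ, x ^ n ∣ r) → r = 0)
    {M : Type*} [AddCommGroup M] [Module R M] [Module.Free R M]
    (A B : Submodule R M)
    (hA : A ⊓ x • (⊤ : Submodule R M) ≤ x • A)
    (hB : B ⊓ x • (⊤ : Submodule R M) ≤ x • B)
    (hAB : (A ⊔ x • (⊤ : Submodule R M)) ⊓ (B ⊔ x • (⊤ : Submodule R M)) ≤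
      x • (⊤ : Submodule R M)) :
    A ⊓ B = ⊥ := by
  have hxM : A ⊓ B ≤ x • ⊤ := (inf_le_inf le_sup_left le_sup_left).trans hAB
  have hdiv : A ⊓ B ≤ x • (A ⊓ B) := by
    rw [Submodule.smul_inf_of_isSMulRegular (.of_ne_zero hx)]
    exact le_inf ((le_inf inf_le_left hxM).trans hA) ((le_inf inf_le_right hxM).trans hB)
  rw [eq_bot_iff, ← Submodule.iInf_pow_smul_top_eq_bot hxint]
  exact le_iInf fun n ↦ (Submodule.le_pow_smul_of_le_smul hdiv n).trans (smul_mono_right _ le_top)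

/-- Lemma 4.2.4.1 (abstracted): if `R` is a domain, `x ≠ 0` with `⋂ₙ xⁿR = 0`,
`M` a finitely generated free `R`-module and `A, B ⊆ M` submodules such that
`A/xA → M/xM` and `B/xB → M/xM` are injective and the images of `A` and `B` in
`M/xM` intersect trivially, then `A ∩ B = 0`. -/
theorem trivial_intersection_of_coinvariants
    {R : Type*} [CommRing R] [IsDomain R] (x : R) (hx : x ≠ 0)
    (hxint : ∀ r : R, (∀ n : ℕ, x ^ n ∣ r) → r = 0)
    {M : Type*} [AddCommGroup M] [Module R M] [Module.Free R M] [Module.Finite R M]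
    (A B : Submodule R M)
    (hA : A ⊓ x • (⊤ : Submodule R M) ≤ x • A)
    (hB : B ⊓ x • (⊤ : Submodule R M) ≤ x • B)
    (hAB : (A ⊔ x • (⊤ : Submodule R M)) ⊓ (B ⊔ x • (⊤ : Submodule R M)) ≤
      x • (⊤ : Submodule R M)) :
    A ⊓ B = ⊥ :=
  trivial_intersection_of_coinvariants_general x hx hxint A B hA hB hAB
end

section
/- Let K be a field of characteristic 0 and let b ∈ K((X)) be a formal Laurent series. Set t = log(1+X) = ∑_{n≥1} (−1)^{n−1} Xⁿ/n ∈ K[[X]], and let ∂ be the operator ∂f = (1+X)·f′ on K((X)), where f′ is the formal derivative. Then for every integer h ≥ 1 the coefficient of X^{−1} in (1+X)^{−1} · t^{h−1} · ∂ʰ(b) is zero. -/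
noncomputable section

/-- `t = log(1+X) = ∑_{n ≥ 1} (-1)^(n-1) Xⁿ / n` in `K⟦X⟧`. -/
def tSeries (K : Type*) [Field K] [CharZero K] : PowerSeries K :=
  PowerSeries.mk fun n => if n = 0 then 0 else (-1 : K) ^ (n - 1) / (n : K)

/-- The formal derivative `f'` of a formal Laurent series. -/
def lderiv {K : Type*} [Field K] (f : LaurentSeries K) : LaurentSeries K where
  coeff n := (n + 1) • f.coeff (n + 1)
  isPWO_support' := by
    refine Set.IsPWO.mono
      (f.isPWO_support'.image_of_monotoneOn (f := fun m => m - 1)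
        (fun a _ b _ hab => by simpa using hab)) ?_
    intro n hn
    have h1 : f.coeff (n + 1) ≠ 0 := by
      intro h0
      apply hn
      simp [Function.mem_support, h0]
    exact ⟨n + 1, h1, by ring⟩

/-- The operator `∂ f = (1+X) · f'` on formal Laurent series. -/
def ldel {K : Type*} [Field K] (f : LaurentSeries K) : LaurentSeries K :=
  (HahnSeries.ofPowerSeries ℤ K (1 + PowerSeries.X)) * lderiv f

/-! With `dt = dX / (1 + X)` we have `∂g · dt = dg`, so the residue in question is that of
`t ^ (h - 1) d(∂ ^ (h - 1) b)`. Integrating by parts moves one `d` onto `t ^ (h - 1)`, and since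
`∂t = 1` this gives `-(h - 1)` times the residue of `t ^ (h - 2) d(∂ ^ (h - 2) b)`. After `h - 1`
steps one is left with the residue of the exact differential `db`, which is zero. -/

section

open PowerSeries HahnSeries

variable {K : Type*} [Field K]

theorem coeff_lderiv (f : LaurentSeries K) (n : ℤ) :
    (lderiv f).coeff n = (n + 1) • f.coeff (n + 1) := rfl

theorem coeff_lderiv_neg_one (f : LaurentSeries K) : (lderiv f).coeff (-1) = 0 := by
  simp [coeff_lderiv]

theorem lderiv_coe (φ : PowerSeries K) :
    lderiv (φ : LaurentSeries K) = (derivative K φ : LaurentSeries K) := by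
  ext n
  rw [coeff_lderiv, PowerSeries.coeff_coe, PowerSeries.coeff_coe]
  split_ifs with h₁ h₂ h₂
  · simp
  · omega
  · simp [show n = -1 by omega]
  · obtain ⟨m, rfl⟩ := Int.eq_ofNat_of_zero_le (not_lt.mp h₂)
    rw [show (m : ℤ) + 1 = ((m + 1 : ℕ) : ℤ) by push_cast; ring, Int.natAbs_natCast,
      Int.natAbs_natCast, coeff_derivative, zsmul_eq_mul]
    push_cast
    ring

theorem lderiv_single_mul (d : ℤ) (f : LaurentSeries K) :
    lderiv (single d (1 : K) * f) =
      (d : LaurentSeries K) * (single (d - 1) (1 : K) * f) + single d (1 : K) * lderiv f := by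
  have coeff_single_mul (e n : ℤ) (g : LaurentSeries K) :
      (single e (1 : K) * g).coeff n = g.coeff (n - e) := by
    simpa using coeff_single_mul_add (r := (1 : K)) (x := g) (a := n - e) (b := e)
  ext n
  rw [coeff_add, coeff_lderiv, coeff_single_mul, ← map_intCast (C : K →+* LaurentSeries K),
    C_mul_eq_smul, HahnSeries.coeff_smul, coeff_single_mul, coeff_single_mul, coeff_lderiv,
    show n - (d - 1) = n + 1 - d by ring, show n - d + 1 = n + 1 - d by ring]
  simp only [zsmul_eq_mul, smul_eq_mul]
  push_cast
  ring

theorem exists_eq_single_mul_coe (f : LaurentSeries K) :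
    ∃ (a : ℤ) (φ : PowerSeries K), f = single a (1 : K) * (φ : LaurentSeries K) :=
  ⟨f.order, f.powerSeriesPart, f.single_order_mul_powerSeriesPart.symm⟩

theorem lderiv_coe_mul (φ : PowerSeries K) (f : LaurentSeries K) :
    lderiv ((φ : LaurentSeries K) * f) = lderiv (φ : LaurentSeries K) * f + φ * lderiv f := by
  obtain ⟨a, ψ, rfl⟩ := exists_eq_single_mul_coe f
  have hφψ : (φ : LaurentSeries K) * (single a (1 : K) * ψ) = single a (1 : K) * ↑(φ * ψ) := by
    rw [PowerSeries.coe_mul]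
    ring
  rw [hφψ, lderiv_single_mul, lderiv_single_mul, lderiv_coe, lderiv_coe, lderiv_coe,
    Derivation.leibniz, smul_eq_mul, smul_eq_mul]
  simp only [PowerSeries.coe_add, PowerSeries.coe_mul]
  ring

theorem lderiv_mul (f g : LaurentSeries K) :
    lderiv (f * g) = lderiv f * g + f * lderiv g := by
  obtain ⟨a, φ, rfl⟩ := exists_eq_single_mul_coe f
  rw [mul_assoc, lderiv_single_mul, lderiv_single_mul, lderiv_coe_mul]
  ring

theorem lderiv_pow (f : LaurentSeries K) (n : ℕ) :
    lderiv (f ^ (n + 1)) = (n + 1 : ℕ) * f ^ n * lderiv f := by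
  induction n with
  | zero => simp
  | succ n ih =>
    rw [pow_succ, lderiv_mul, ih]
    push_cast
    ring

-- Integration by parts: `res (f dg) = -res (g df)`.
theorem coeff_mul_lderiv_neg_one (f g : LaurentSeries K) :
    (f * lderiv g).coeff (-1) = -(lderiv f * g).coeff (-1) := by
  have h := coeff_lderiv_neg_one (f * g)
  rw [lderiv_mul, coeff_add] at h
  exact eq_neg_of_add_eq_zero_right h

theorem ldel_eq_mul_lderiv (f : LaurentSeries K) :
    ldel f = ((1 + X : PowerSeries K) : LaurentSeries K) * lderiv f := rfl

theorem inv_mul_ldel (f : LaurentSeries K) :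
    ((1 + X : PowerSeries K) : LaurentSeries K)⁻¹ * ldel f = lderiv f := by
  have h : ((1 + X : PowerSeries K) : LaurentSeries K) ≠ 0 := by
    rw [Ne, ← PowerSeries.coe_zero, ofPowerSeries_injective.eq_iff]
    exact fun h0 => by simpa using congrArg (PowerSeries.constantCoeff (R := K)) h0
  rw [ldel_eq_mul_lderiv, inv_mul_cancel_left₀ h]

theorem coeff_pow_mul_lderiv_iterate_ldel_neg_one {s : LaurentSeries K} (hs : ldel s = 1)
    (b : LaurentSeries K) (k : ℕ) : (s ^ k * lderiv (ldel^[k] b)).coeff (-1) = 0 := by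
  induction k with
  | zero => simpa using coeff_lderiv_neg_one b
  | succ k ih =>
    have hparts : lderiv (s ^ (k + 1)) * ldel (ldel^[k] b) =
        (k + 1 : ℕ) * (ldel s * (s ^ k * lderiv (ldel^[k] b))) := by
      rw [lderiv_pow, ldel_eq_mul_lderiv, ldel_eq_mul_lderiv]
      ring
    rw [Function.iterate_succ_apply', coeff_mul_lderiv_neg_one, hparts, hs, one_mul,
      ← map_natCast (C : K →+* LaurentSeries K), C_mul_eq_smul, HahnSeries.coeff_smul, ih,
      smul_zero, neg_zero]

variable [CharZero K]

theorem one_add_X_mul_derivative_tSeries : (1 + X) * derivative K (tSeries K) = 1 := by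
  have hcoeff (m : ℕ) : coeff m (derivative K (tSeries K)) = (-1 : K) ^ m := by
    rw [coeff_derivative, tSeries, coeff_mk, if_neg m.succ_ne_zero, Nat.add_sub_cancel]
    push_cast
    exact div_mul_cancel₀ _ (Nat.cast_add_one_ne_zero m)
  ext (_ | m)
  · rw [add_mul, one_mul, map_add, coeff_zero_X_mul, hcoeff]
    simp
  · rw [add_mul, one_mul, map_add, coeff_succ_X_mul, hcoeff, hcoeff, PowerSeries.coeff_one,
      if_neg m.succ_ne_zero, pow_succ]
    ring

theorem ldel_tSeries : ldel (tSeries K : LaurentSeries K) = 1 := by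
  rw [ldel_eq_mul_lderiv, lderiv_coe, ← PowerSeries.coe_mul, one_add_X_mul_derivative_tSeries,
    PowerSeries.coe_one]

end

/-- The residue computation from the proof of Proposition 3.2.2: for every
Laurent series `b` and every `h ≥ 1`, the coefficient of `X⁻¹` in
`(1+X)⁻¹ · t^(h-1) · ∂ʰ(b)` vanishes. -/
theorem residue_t_pow_del_iterate
    {K : Type*} [Field K] [CharZero K] (b : LaurentSeries K) (h : ℕ) (hh : 1 ≤ h) :
    ((HahnSeries.ofPowerSeries ℤ K (1 + PowerSeries.X))⁻¹ *
        (HahnSeries.ofPowerSeries ℤ K (tSeries K)) ^ (h - 1) *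
        ldel^[h] b).coeff (-1) = 0 := by
  obtain ⟨k, rfl⟩ := Nat.exists_eq_add_of_le' hh
  rw [Nat.add_sub_cancel, Function.iterate_succ_apply', mul_assoc, mul_left_comm, inv_mul_ldel]
  exact coeff_pow_mul_lderiv_iterate_ldel_neg_one ldel_tSeries b k

end
end
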